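/- Consider two tasks i and j with the same transitions and discount γ ∈ [0,1). Let π_i⋆, π_j⋆ be their optimal policies. Then the suboptimality of evaluating π_j⋆ on task i is bounded by sup_{s,a} |Q_i^{π_i⋆}(s,a) − Q_i^{π_j⋆}(s,a)| ≤ (2γ/(1−γ)) · sup_{s,a} |r_i(s,a) − r_j(s,a)|. -/
import Mathlib

private lemma abs_ciSup_sub_ciSup {A : Type*} [Fintype A] [Nonempty A]
    (f g : A → ℝ) (C : ℝ) (h : ∀ a, |f a - g a| ≤ C) :
    |(⨆ a, f a) - ⨆ a, g a| ≤ C := by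
  rw [abs_sub_le_iff]
  constructor
  · rw [sub_le_iff_le_add]
    refine ciSup_le fun a => ?_
    have := (abs_le.mp (h a)).2
    have hle : f a ≤ g a + C := by linarith
    exact hle.trans (by
      have := le_ciSup (Set.finite_range g).bddAbove a
      linarith)
  · rw [sub_le_iff_le_add]
    refine ciSup_le fun a => ?_
    have := (abs_le.mp (h a)).1
    have hle : g a ≤ f a + C := by linarith
    exact hle.trans (by
      have := le_ciSup (Set.finite_range f).bddAbove a
      linarith)

private lemma abs_weighted_sum_le {S : Type*} [Fintype S]
    (p x : S → ℝ) (C : ℝ) (hp0 : ∀ s, 0 ≤ p s) (hp1 : ∑ s, p s = 1)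
    (hx : ∀ s, |x s| ≤ C) : |∑ s, p s * x s| ≤ C := by
  calc |∑ s, p s * x s| ≤ ∑ s, |p s * x s| := Finset.abs_sum_le_sum_abs _ _
    _ = ∑ s, p s * |x s| := by
        refine Finset.sum_congr rfl fun s _ => ?_
        rw [abs_mul, abs_of_nonneg (hp0 s)]
    _ ≤ ∑ s, p s * C := by
        refine Finset.sum_le_sum fun s _ => ?_
        exact mul_le_mul_of_nonneg_left (hx s) (hp0 s)
    _ = C := by rw [← Finset.sum_mul, hp1, one_mul]

/-- Lemma `DQN_difference`: The suboptimality on task `i` of the optimal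
policy `π_j⋆` of task `j` is bounded by `(2γ/(1−γ)) · sup |r_i − r_j|`. -/
theorem policy_transfer_suboptimality {S A : Type*} [Fintype S] [Fintype A] [Nonempty S] [Nonempty A]
    (γ : ℝ) (hγ0 : 0 ≤ γ) (hγ1 : γ < 1)
    (P : S → A → S → ℝ) (hP0 : ∀ s a s', 0 ≤ P s a s') (hP1 : ∀ s a, ∑ s', P s a s' = 1)
    (ri rj : S → A → ℝ) (Qi Qj Qiπ : S → A → ℝ) (π : S → A)
    (hQi : ∀ s a, Qi s a = ri s a + γ * ∑ s', P s a s' * (⨆ a', Qi s' a'))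
    (hQj : ∀ s a, Qj s a = rj s a + γ * ∑ s', P s a s' * (⨆ a', Qj s' a'))
    (hgreedy : ∀ s, Qj s (π s) = ⨆ a, Qj s a)  -- π = π_j⋆, greedy w.r.t. Q_j⋆
    (hQiπ : ∀ s a, Qiπ s a = ri s a + γ * ∑ s', P s a s' * Qiπ s' (π s')) :
    ∀ s a, |Qi s a - Qiπ s a| ≤ (2 * γ / (1 - γ)) * ⨆ p : S × A, |ri p.1 p.2 - rj p.1 p.2| := by
  have hγ1' : 0 < 1 - γ := by linarith
  set ε : ℝ := ⨆ p : S × A, |ri p.1 p.2 - rj p.1 p.2| with hε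
  have hεle : ∀ s a, |ri s a - rj s a| ≤ ε := fun s a =>
    le_ciSup (Set.finite_range fun p : S × A => |ri p.1 p.2 - rj p.1 p.2|).bddAbove (⟨s, a⟩ : S × A)
  -- Bound M = sup |Qi - Qj| ≤ ε / (1 - γ)
  set M : ℝ := ⨆ p : S × A, |Qi p.1 p.2 - Qj p.1 p.2| with hM
  have hMle : ∀ s a, |Qi s a - Qj s a| ≤ M := fun s a =>
    le_ciSup (Set.finite_range fun p : S × A => |Qi p.1 p.2 - Qj p.1 p.2|).bddAbove (⟨s, a⟩ : S × A)
  have hMstep : M ≤ ε + γ * M := by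
    refine ciSup_le fun p => ?_
    obtain ⟨s, a⟩ := p
    have hV : ∀ s', |(⨆ a', Qi s' a') - ⨆ a', Qj s' a'| ≤ M := fun s' =>
      abs_ciSup_sub_ciSup _ _ M (fun a' => hMle s' a')
    have hsum : |∑ s', P s a s' * ((⨆ a', Qi s' a') - ⨆ a', Qj s' a')| ≤ M :=
      abs_weighted_sum_le _ _ M (hP0 s a) (hP1 s a) hV
    have hdiff : Qi s a - Qj s a =
        (ri s a - rj s a) + γ * ∑ s', P s a s' * ((⨆ a', Qi s' a') - ⨆ a', Qj s' a') := by
      rw [hQi s a, hQj s a]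
      simp only [mul_sub, Finset.sum_sub_distrib]
      ring
    calc |Qi s a - Qj s a| ≤ |ri s a - rj s a| +
          |γ * ∑ s', P s a s' * ((⨆ a', Qi s' a') - ⨆ a', Qj s' a')| := by
          rw [hdiff]; exact abs_add_le _ _
      _ ≤ ε + γ * M := by
          refine add_le_add (hεle s a) ?_
          rw [abs_mul, abs_of_nonneg hγ0]
          exact mul_le_mul_of_nonneg_left hsum hγ0
  have hMbound : M ≤ ε / (1 - γ) := by
    rw [le_div_iff₀ hγ1']
    nlinarith
  -- Bound N = sup |Qj - Qiπ| ≤ ε / (1 - γ)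
  set N : ℝ := ⨆ p : S × A, |Qj p.1 p.2 - Qiπ p.1 p.2| with hN
  have hNle : ∀ s a, |Qj s a - Qiπ s a| ≤ N := fun s a =>
    le_ciSup (Set.finite_range fun p : S × A => |Qj p.1 p.2 - Qiπ p.1 p.2|).bddAbove (⟨s, a⟩ : S × A)
  have hQj' : ∀ s a, Qj s a = rj s a + γ * ∑ s', P s a s' * Qj s' (π s') := by
    intro s a
    rw [hQj s a]
    congr 2
    exact Finset.sum_congr rfl fun s' _ => by rw [hgreedy s']
  have hNstep : N ≤ ε + γ * N := by
    refine ciSup_le fun p => ?_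
    obtain ⟨s, a⟩ := p
    have hV : ∀ s', |Qj s' (π s') - Qiπ s' (π s')| ≤ N := fun s' => hNle s' (π s')
    have hsum : |∑ s', P s a s' * (Qj s' (π s') - Qiπ s' (π s'))| ≤ N :=
      abs_weighted_sum_le _ _ N (hP0 s a) (hP1 s a) hV
    have hdiff : Qj s a - Qiπ s a =
        (rj s a - ri s a) + γ * ∑ s', P s a s' * (Qj s' (π s') - Qiπ s' (π s')) := by
      rw [hQj' s a, hQiπ s a]
      simp only [mul_sub, Finset.sum_sub_distrib]
      ring
    calc |Qj s a - Qiπ s a| ≤ |rj s a - ri s a| +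
          |γ * ∑ s', P s a s' * (Qj s' (π s') - Qiπ s' (π s'))| := by
          rw [hdiff]; exact abs_add_le _ _
      _ ≤ ε + γ * N := by
          refine add_le_add ?_ ?_
          · rw [abs_sub_comm]; exact hεle s a
          · rw [abs_mul, abs_of_nonneg hγ0]
            exact mul_le_mul_of_nonneg_left hsum hγ0
  have hNbound : N ≤ ε / (1 - γ) := by
    rw [le_div_iff₀ hγ1']
    nlinarith
  -- Final step
  intro s a
  have hV : ∀ s', |(⨆ a', Qi s' a') - Qiπ s' (π s')| ≤ M + N := by
    intro s'
    have h1 : |(⨆ a', Qi s' a') - ⨆ a', Qj s' a'| ≤ M :=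
      abs_ciSup_sub_ciSup _ _ M (fun a' => hMle s' a')
    have h2 : |Qj s' (π s') - Qiπ s' (π s')| ≤ N := hNle s' (π s')
    calc |(⨆ a', Qi s' a') - Qiπ s' (π s')|
        = |((⨆ a', Qi s' a') - ⨆ a', Qj s' a') + (Qj s' (π s') - Qiπ s' (π s'))| := by
          rw [hgreedy s']; ring_nf
      _ ≤ |(⨆ a', Qi s' a') - ⨆ a', Qj s' a'| + |Qj s' (π s') - Qiπ s' (π s')| := abs_add_le _ _
      _ ≤ M + N := add_le_add h1 h2
  have hsum : |∑ s', P s a s' * ((⨆ a', Qi s' a') - Qiπ s' (π s'))| ≤ M + N :=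
    abs_weighted_sum_le _ _ (M + N) (hP0 s a) (hP1 s a) hV
  have hdiff : Qi s a - Qiπ s a =
      γ * ∑ s', P s a s' * ((⨆ a', Qi s' a') - Qiπ s' (π s')) := by
    rw [hQi s a, hQiπ s a]
    simp only [mul_sub, Finset.sum_sub_distrib]
    ring
  calc |Qi s a - Qiπ s a|
      = |γ * ∑ s', P s a s' * ((⨆ a', Qi s' a') - Qiπ s' (π s'))| := by rw [hdiff]
    _ ≤ γ * (M + N) := by
        rw [abs_mul, abs_of_nonneg hγ0]
        exact mul_le_mul_of_nonneg_left hsum hγ0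
    _ ≤ γ * (ε / (1 - γ) + ε / (1 - γ)) :=
        mul_le_mul_of_nonneg_left (add_le_add hMbound hNbound) hγ0
    _ = (2 * γ / (1 - γ)) * ε := by field_simp; ring
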